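/- Existence of refinement type interpolants: let R₁ = {ν : Table(σ₁) | φ₁} and R₂ = {ν : Table(σ₂) | φ₂} be refinement types over table base types whose qualifiers φ₁, φ₂ are propositional formulas over a common set of propositional variables, each depending only on a finite set of variables. If R₁ and R₂ are incompatible — that is, either Table(σ₁) is incompatible with Table(σ₂), or Table(σ₁) ~ Table(σ₂) and φ₁ ∧ φ₂ is unsatisfiable — then a refinement type interpolant for R₁ and R₂ exists: in the first case a base type interpolant for Table(σ₁) and Table(σ₂), and in the second case a refinement type {ν : Table(σ₁) | ψ} where ψ is a propositional Craig interpolant for φ₁ and φ₂. -/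

import Mathlib

/-- Column types in the refinement type system. -/
inductive ColTy where
  | top | quantitative | qualitative | discrete | continuous
  | nominal | ordinal | temporal
deriving DecidableEq

/-- The subtyping axioms on column types. -/
inductive ColSubAx : ColTy → ColTy → Prop where
  | quant_top : ColSubAx .quantitative .top
  | qual_top  : ColSubAx .qualitative .top
  | disc_quant : ColSubAx .discrete .quantitative
  | cont_quant : ColSubAx .continuous .quantitative
  | nom_qual  : ColSubAx .nominal .qualitative
  | ord_qual  : ColSubAx .ordinal .qualitative
  | temp_qual : ColSubAx .temporal .qualitative

/-- Column subtyping: the reflexive-transitive closure of the axioms. -/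
def ColSub : ColTy → ColTy → Prop := Relation.ReflTransGen ColSubAx

/-- Two column types are compatible iff one is a subtype of the other. -/
def ColCompat (β₁ β₂ : ColTy) : Prop := ColSub β₁ β₂ ∨ ColSub β₂ β₁

/-- A schema is a finite partial map from column names to column types. -/
abbrev Schema := Finmap (fun _ : String => ColTy)

/-- Table subtyping (a table type `Table σ` is determined by its schema `σ`;
    since `Finmap` is quotiented by permutation, the permutation rule is implicit). -/
inductive TableSub : Schema → Schema → Prop where
  | width (σ₁ σ₂ : Schema) :
      (∀ c τ, σ₂.lookup c = some τ → σ₁.lookup c = some τ) → TableSub σ₁ σ₂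
  | depth (σ₁ σ₂ : Schema) :
      σ₁.keys = σ₂.keys →
      (∀ c τ₁ τ₂, σ₁.lookup c = some τ₁ → σ₂.lookup c = some τ₂ → ColSub τ₁ τ₂) →
      TableSub σ₁ σ₂
  | trans {σ₁ σ₂ σ₃ : Schema} : TableSub σ₁ σ₂ → TableSub σ₂ σ₃ → TableSub σ₁ σ₃

/-- Table compatibility: every shared column's types are compatible. -/
def TableCompat (σ₁ σ₂ : Schema) : Prop :=
  ∀ c τ₁ τ₂, σ₁.lookup c = some τ₁ → σ₂.lookup c = some τ₂ → ColCompat τ₁ τ₂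

/-- A propositional formula over variables `V` depends only on the variables in `S`
    if its truth value agrees on any two valuations that agree on `S`. -/
def DependsOnlyOn {V : Type*} (f : (V → Bool) → Prop) (S : Set V) : Prop :=
  ∀ v v' : V → Bool, (∀ x ∈ S, v x = v' x) → (f v ↔ f v')

/-!
If the base types are incompatible, some shared column `c` carries incompatible types `τ₁, τ₂`.
Lifting `τ₁` to its column-type interpolant `τ` (a finite check on the eight column types) gives
the one-column schema `{c : τ}`, which is a table interpolant: any strictly larger table type
either drops `c` or weakens `τ`, and both restore compatibility.

If the qualifiers are jointly unsatisfiable, the projection of `φ₁` onto the shared variables,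
`ψ v := ∃ w, φ₁ w ∧ w = v on V₁ ∩ V₂`, is a Craig interpolant: a witness `w` for `ψ v` and a
model `v` of `φ₂` agree on `V₁ ∩ V₂`, so they glue into a model of `φ₁ ∧ φ₂`.
-/
instance : Fintype ColTy where
  elems := {.top, .quantitative, .qualitative, .discrete, .continuous, .nominal, .ordinal,
    .temporal}
  complete x := by cases x <;> simp

def colSubB (a b : ColTy) : Bool :=
  a = b || b = .top ||
  ((a = .discrete || a = .continuous) && b = .quantitative) ||
  ((a = .nominal || a = .ordinal || a = .temporal) && b = .qualitative)

theorem colSubB_of_colSubB_of_colSubAx {a b c : ColTy} (hab : colSubB a b) (hbc : ColSubAx b c) :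
    colSubB a c := by
  cases hbc <;> revert hab <;> revert a <;> decide

theorem colSub_of_colSubB {a b : ColTy} (h : colSubB a b) : ColSub a b := by
  cases a <;> cases b <;> simp [colSubB] at h <;>
    first
    | exact .refl
    | exact .single (by constructor)
    | exact .tail (.single (by constructor)) (by constructor)

theorem colSub_iff_colSubB {a b : ColTy} : ColSub a b ↔ colSubB a b := by
  refine ⟨fun h => ?_, colSub_of_colSubB⟩
  induction h with
  | refl => cases a <;> rfl
  | tail _ hax ih => exact colSubB_of_colSubB_of_colSubAx ih hax

instance : DecidableRel ColSub := fun _ _ => decidable_of_iff _ colSub_iff_colSubB.symm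

instance : DecidableRel ColCompat := fun _ _ => inferInstanceAs (Decidable (_ ∨ _))

def IsBaseInterpolant {T : Type*} (sub compat : T → T → Prop) (τ₁ τ₂ τ : T) : Prop :=
  sub τ₁ τ ∧ ¬ compat τ τ₂ ∧ ∀ τ', sub τ τ' → τ' ≠ τ → compat τ' τ₂

instance {T : Type*} [DecidableEq T] [Fintype T] (sub compat : T → T → Prop) [DecidableRel sub]
    [DecidableRel compat] (τ₁ τ₂ τ : T) : Decidable (IsBaseInterpolant sub compat τ₁ τ₂ τ) :=
  inferInstanceAs (Decidable (_ ∧ _))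

theorem ColTy.exists_isBaseInterpolant :
    ∀ τ₁ τ₂ : ColTy, ¬ ColCompat τ₁ τ₂ → ∃ τ, IsBaseInterpolant ColSub ColCompat τ₁ τ₂ τ := by
  decide

theorem Finmap.lookup_singleton_eq_some {α β : Type*} [DecidableEq α] {a d : α} {b b' : β} :
    (Finmap.singleton a b : Finmap fun _ : α => β).lookup d = some b' ↔ d = a ∧ b = b' := by
  by_cases hd : d = a
  · subst hd; simp [lookup_singleton_eq]
  · rw [lookup_eq_none.mpr (by simpa [mem_singleton] using hd)]; simp [hd]

theorem TableSub.exists_lookup {σ σ' : Schema} (h : TableSub σ σ') {c : String} {τ' : ColTy}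
    (hc : σ'.lookup c = some τ') : ∃ τ, σ.lookup c = some τ ∧ ColSub τ τ' := by
  induction h generalizing τ' with
  | width _ _ hw => exact ⟨τ', hw c τ' hc, .refl⟩
  | depth σ₁ _ hkeys hsub =>
    obtain ⟨τ, hτ⟩ : ∃ τ, σ₁.lookup c = some τ := by
      rw [← Option.isSome_iff_exists, Finmap.lookup_isSome, ← Finmap.mem_keys, hkeys,
        Finmap.mem_keys, ← Finmap.lookup_isSome, hc, Option.isSome_some]
    exact ⟨τ, hτ, hsub c τ τ' hτ hc⟩
  | trans _ _ ih₁ ih₂ =>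
    obtain ⟨τ₂, hτ₂, hsub₂⟩ := ih₂ hc
    obtain ⟨τ₁, hτ₁, hsub₁⟩ := ih₁ hτ₂
    exact ⟨τ₁, hτ₁, hsub₁.trans hsub₂⟩

theorem tableSub_singleton {σ : Schema} {c : String} {τ₀ τ : ColTy} (hc : σ.lookup c = some τ₀)
    (hsub : ColSub τ₀ τ) : TableSub σ (Finmap.singleton c τ) := by
  refine .trans (.width σ (Finmap.singleton c τ₀) fun d τ' hd => ?_) (.depth _ _ rfl ?_)
  · obtain ⟨rfl, rfl⟩ := Finmap.lookup_singleton_eq_some.mp hd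
    exact hc
  · intro d τ₁ τ₂ h₁ h₂
    obtain ⟨rfl, rfl⟩ := Finmap.lookup_singleton_eq_some.mp h₁
    obtain ⟨-, rfl⟩ := Finmap.lookup_singleton_eq_some.mp h₂
    exact hsub

theorem TableSub.eq_singleton {c : String} {τ : ColTy} {σ : Schema}
    (h : TableSub (Finmap.singleton c τ) σ) (hc : σ.lookup c = some τ) :
    σ = Finmap.singleton c τ := by
  refine Finmap.ext_lookup fun d => ?_
  by_cases hd : d = c
  · rw [hd, hc, Finmap.lookup_singleton_eq]
  · have hsingleton : (Finmap.singleton c τ : Schema).lookup d = none :=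
      Finmap.lookup_eq_none.mpr (by simpa [Finmap.mem_singleton] using hd)
    rw [hsingleton, Option.eq_none_iff_forall_ne_some]
    intro τ' hτ'
    obtain ⟨_, hd', -⟩ := h.exists_lookup hτ'
    exact hd (Finmap.lookup_singleton_eq_some.mp hd').1

theorem exists_isBaseInterpolant_tableSub {σ₁ σ₂ : Schema} (h : ¬ TableCompat σ₁ σ₂) :
    ∃ σ, IsBaseInterpolant TableSub TableCompat σ₁ σ₂ σ := by
  simp only [TableCompat, not_forall] at h
  obtain ⟨c, τ₁, τ₂, h₁, h₂, hinc⟩ := h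
  obtain ⟨τ, hsub, hninc, hmax⟩ := ColTy.exists_isBaseInterpolant τ₁ τ₂ hinc
  refine ⟨Finmap.singleton c τ, tableSub_singleton h₁ hsub,
    fun hcompat => hninc (hcompat c τ τ₂ Finmap.lookup_singleton_eq h₂), ?_⟩
  intro σ hσ hne d τ' τ₂' hd hd₂
  obtain ⟨τ'', hτ'', hsub'⟩ := hσ.exists_lookup hd
  obtain ⟨rfl, rfl⟩ := Finmap.lookup_singleton_eq_some.mp hτ''
  obtain rfl : τ₂ = τ₂' := Option.some_inj.mp (h₂.symm.trans hd₂)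
  exact hmax τ' hsub' fun hτ' => hne (hσ.eq_singleton (hτ' ▸ hd))

def IsCraigInterpolant {V : Type*} (φ₁ φ₂ ψ : (V → Bool) → Prop) (S : Set V) : Prop :=
  DependsOnlyOn ψ S ∧ (∀ v, φ₁ v → ψ v) ∧ ∀ v, ¬ (ψ v ∧ φ₂ v)

theorem exists_isCraigInterpolant {V : Type*} {φ₁ φ₂ : (V → Bool) → Prop} {V₁ V₂ : Set V}
    (hφ₁ : DependsOnlyOn φ₁ V₁) (hφ₂ : DependsOnlyOn φ₂ V₂) (h : ∀ v, ¬ (φ₁ v ∧ φ₂ v)) :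
    ∃ ψ, IsCraigInterpolant φ₁ φ₂ ψ (V₁ ∩ V₂) := by
  classical
  refine ⟨fun v => ∃ w, φ₁ w ∧ ∀ x ∈ V₁ ∩ V₂, w x = v x, ?_,
    fun v hv => ⟨v, hv, fun _ _ => rfl⟩, ?_⟩
  · intro v v' hvv'
    exact exists_congr fun w => and_congr_right fun _ =>
      forall₂_congr fun x hx => by rw [hvv' x hx]
  · rintro v ⟨⟨w, hw, hwv⟩, hv⟩
    refine h (V₁.piecewise w v) ⟨(hφ₁ _ _ fun x hx => ?_).mp hw, (hφ₂ _ _ fun x hx => ?_).mp hv⟩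
    · rw [Set.piecewise_eq_of_mem _ _ _ hx]
    · by_cases hx₁ : x ∈ V₁
      · rw [Set.piecewise_eq_of_mem _ _ _ hx₁, hwv x ⟨hx₁, hx⟩]
      · rw [Set.piecewise_eq_of_notMem _ _ _ hx₁]

theorem exists_refinement_type_interpolant_general {V : Type*} (σ₁ σ₂ : Schema)
    (φ₁ φ₂ : (V → Bool) → Prop) (V₁ V₂ : Set V)
    (hφ₁ : DependsOnlyOn φ₁ V₁) (hφ₂ : DependsOnlyOn φ₂ V₂) :
    -- Case 1: the base table types are incompatible.
    (¬ TableCompat σ₁ σ₂ →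
      ∃ σ : Schema,
        TableSub σ₁ σ ∧
        ¬ TableCompat σ σ₂ ∧
        (∀ σ' : Schema, TableSub σ σ' → σ' ≠ σ → TableCompat σ' σ₂)) ∧
    -- Case 2: the base table types are compatible but the qualifiers are jointly
    -- unsatisfiable.
    (TableCompat σ₁ σ₂ → (∀ v : V → Bool, ¬ (φ₁ v ∧ φ₂ v)) →
      ∃ ψ : (V → Bool) → Prop,
        DependsOnlyOn ψ (V₁ ∩ V₂) ∧
        (∀ v : V → Bool, φ₁ v → ψ v) ∧
        (∀ v : V → Bool, ¬ (ψ v ∧ φ₂ v))) :=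
  ⟨exists_isBaseInterpolant_tableSub, fun _ => exists_isCraigInterpolant hφ₁ hφ₂⟩

/-- Existence of refinement type interpolants for incompatible refinement types
    `{ν : Table σ₁ | φ₁}` and `{ν : Table σ₂ | φ₂}`: a base type interpolant when the
    base table types are incompatible, and a refinement `{ν : Table σ₁ | ψ}` with `ψ` a
    propositional Craig interpolant when the base types are compatible but `φ₁ ∧ φ₂`
    is unsatisfiable. -/
theorem exists_refinement_type_interpolant {V : Type*} (σ₁ σ₂ : Schema)
    (φ₁ φ₂ : (V → Bool) → Prop) (V₁ V₂ : Set V)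
    (hV₁ : V₁.Finite) (hV₂ : V₂.Finite)
    (hφ₁ : DependsOnlyOn φ₁ V₁) (hφ₂ : DependsOnlyOn φ₂ V₂) :
    -- Case 1: the base table types are incompatible.
    (¬ TableCompat σ₁ σ₂ →
      ∃ σ : Schema,
        TableSub σ₁ σ ∧
        ¬ TableCompat σ σ₂ ∧
        (∀ σ' : Schema, TableSub σ σ' → σ' ≠ σ → TableCompat σ' σ₂)) ∧
    -- Case 2: the base table types are compatible but the qualifiers are jointly
    -- unsatisfiable.
    (TableCompat σ₁ σ₂ → (∀ v : V → Bool, ¬ (φ₁ v ∧ φ₂ v)) →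
      ∃ ψ : (V → Bool) → Prop,
        DependsOnlyOn ψ (V₁ ∩ V₂) ∧
        (∀ v : V → Bool, φ₁ v → ψ v) ∧
        (∀ v : V → Bool, ¬ (ψ v ∧ φ₂ v))) :=
  exists_refinement_type_interpolant_general σ₁ σ₂ φ₁ φ₂ V₁ V₂ hφ₁ hφ₂
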